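/- arXiv:2512.11380 — 2 statements merged into one kernel-verified Lean document; each statement's English description precedes it below -/
import Mathlib

section
/- Let Ω̃ and Ω be simply connected open subsets of ℂ with finite two-dimensional Lebesgue measure and let φ : Ω̃ → Ω be a holomorphic bijection. Then for every p > 2, every q with 1 ≤ q ≤ 2, and every continuously differentiable function f : Ω → ℝ, (∫_{Ω̃} ‖∇(f∘φ)(w)‖^q dA(w))^{1/q} ≤ |Ω|^{(p-2)/(2p)} · |Ω̃|^{(2-q)/(2q)} · (∫_{Ω} ‖∇f(z)‖^p dA(z))^{1/p} (an inequality in [0,∞]). -/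
open MeasureTheory Real Set
open scoped ENNReal

/-!
The chain rule bounds `‖∇(f ∘ φ)‖` by `|φ'| · ‖∇f ∘ φ‖`. Since the real Jacobian of `φ`
is `|φ'|²`, the change of variables `z = φ w` shows that this majorant has the same
`L²(Ω̃)` norm as `∇f` has in `L²(Ω)`: the Dirichlet integral is conformally invariant.
Hölder's inequality then lowers the exponent from `2` to `q` on `Ω̃` and raises it from `2`
to `p` on `Ω`, at the cost of the powers of `|Ω̃|` and `|Ω|`.
-/

theorem Complex.det_restrictScalars_toSpanSingleton (c : ℂ) :
    ((ContinuousLinearMap.toSpanSingleton ℂ c).restrictScalars ℝ).det = normSq c := by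
  rw [ContinuousLinearMap.det, ContinuousLinearMap.coe_restrictScalars,
    LinearMap.det_restrictScalars, ← ContinuousLinearMap.det,
    ContinuousLinearMap.det_toSpanSingleton, Algebra.norm_complex_apply]

theorem norm_fderiv_comp_le_of_hasDerivAt {E : Type*} [NormedAddCommGroup E] [NormedSpace ℝ E]
    {f : ℂ → E} {φ : ℂ → ℂ} {c w : ℂ} (hf : DifferentiableAt ℝ f (φ w))
    (hφ : HasDerivAt φ c w) :
    ‖fderiv ℝ (f ∘ φ) w‖ ≤ ‖c‖ * ‖fderiv ℝ f (φ w)‖ := by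
  rw [(hf.hasFDerivAt.comp w (hφ.hasFDerivAt.restrictScalars ℝ)).fderiv, mul_comm]
  refine (ContinuousLinearMap.opNorm_comp_le _ _).trans_eq ?_
  rw [ContinuousLinearMap.norm_restrictScalars, ContinuousLinearMap.norm_toSpanSingleton]

theorem lintegral_image_eq_lintegral_enorm_sq_deriv_mul {φ φ' : ℂ → ℂ} {s : Set ℂ}
    (hs : MeasurableSet s) (hφ : ∀ w ∈ s, HasDerivWithinAt φ (φ' w) s w) (hinj : InjOn φ s)
    (g : ℂ → ℝ≥0∞) :
    ∫⁻ z in φ '' s, g z = ∫⁻ w in s, ‖φ' w‖ₑ ^ 2 * g (φ w) := by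
  rw [lintegral_image_eq_lintegral_abs_det_fderiv_mul volume hs
    (fun w hw => (hφ w hw).hasFDerivWithinAt.restrictScalars ℝ) hinj]
  refine setLIntegral_congr_fun hs fun w _ => ?_
  rw [Complex.det_restrictScalars_toSpanSingleton, abs_of_nonneg (Complex.normSq_nonneg _),
    Complex.normSq_eq_norm_sq, ENNReal.ofReal_pow (norm_nonneg _), ofReal_norm]

theorem eLpNorm'_two_norm_deriv_mul_comp {E : Type*} [NormedAddCommGroup E] {φ φ' : ℂ → ℂ}
    {s : Set ℂ} (hs : MeasurableSet s) (hφ : ∀ w ∈ s, HasDerivWithinAt φ (φ' w) s w)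
    (hinj : InjOn φ s) (g : ℂ → E) :
    eLpNorm' (fun w => ‖φ' w‖ * ‖g (φ w)‖) 2 (volume.restrict s)
      = eLpNorm' g 2 (volume.restrict (φ '' s)) := by
  simp only [eLpNorm', lintegral_image_eq_lintegral_enorm_sq_deriv_mul hs hφ hinj]
  congr 1
  refine lintegral_congr fun w => ?_
  rw [enorm_mul, enorm_norm, enorm_norm, ENNReal.mul_rpow_of_nonneg _ _ zero_le_two,
    ENNReal.rpow_two]

theorem aemeasurable_restrict_of_hasDerivAt {𝕜 F : Type*} [NontriviallyNormedField 𝕜]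
    [MeasurableSpace 𝕜] [OpensMeasurableSpace 𝕜] [NormedAddCommGroup F] [NormedSpace 𝕜 F]
    [CompleteSpace F] [MeasurableSpace F] [BorelSpace F] {μ : Measure 𝕜} {φ φ' : 𝕜 → F}
    {s : Set 𝕜}
    (hs : MeasurableSet s) (hφ : ∀ x ∈ s, HasDerivAt φ (φ' x) x) :
    AEMeasurable φ' (μ.restrict s) :=
  (measurable_deriv φ).aemeasurable.congr <|
    (ae_restrict_mem hs).mono fun x hx => (hφ x hx).deriv

theorem conformal_composition_operator_bound_general
    (Ω' Ω : Set ℂ) (hΩ'o : IsOpen Ω') (hΩo : IsOpen Ω)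
    (φ : ℂ → ℂ) (φ' : ℂ → ℂ)
    (hholo : ∀ w ∈ Ω', HasDerivAt φ (φ' w) w)
    (hbij : Set.BijOn φ Ω' Ω)
    (p q : ℝ) (hp : 2 < p) (hq1 : 1 ≤ q) (hq2 : q ≤ 2)
    (f : ℂ → ℝ) (hf : ContDiffOn ℝ 1 f Ω) :
    (∫⁻ w in Ω', (‖fderiv ℝ (f ∘ φ) w‖₊ : ℝ≥0∞) ^ q) ^ (1 / q)
      ≤ volume Ω ^ ((p - 2) / (2 * p)) * volume Ω' ^ ((2 - q) / (2 * q))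
        * (∫⁻ z in Ω, (‖fderiv ℝ f z‖₊ : ℝ≥0∞) ^ p) ^ (1 / p) := by
  have hq : 0 < q := one_pos.trans_le hq1
  have hfd : ∀ z ∈ Ω, DifferentiableAt ℝ f z := fun z hz =>
    (hf.differentiableOn one_ne_zero z hz).differentiableAt (hΩo.mem_nhds hz)
  set g := fun w => ‖φ' w‖ * ‖fderiv ℝ f (φ w)‖
  have hφ_meas : AEMeasurable φ (volume.restrict Ω') :=
    ContinuousOn.aemeasurable (fun w hw => (hholo w hw).continuousAt.continuousWithinAt)
      hΩ'o.measurableSet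
  have hg_meas : AEStronglyMeasurable g (volume.restrict Ω') :=
    ((aemeasurable_restrict_of_hasDerivAt hΩ'o.measurableSet hholo).norm.mul
      ((measurable_fderiv ℝ f).norm.comp_aemeasurable hφ_meas)).aestronglyMeasurable
  simp only [← enorm_eq_nnnorm]
  change eLpNorm' _ q _ ≤ _ * _ * eLpNorm' _ p _
  calc eLpNorm' (fderiv ℝ (f ∘ φ)) q (volume.restrict Ω')
      ≤ eLpNorm' g q (volume.restrict Ω') := eLpNorm'_mono_ae hq.le <|
        (ae_restrict_mem hΩ'o.measurableSet).mono fun w hw =>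
          (norm_fderiv_comp_le_of_hasDerivAt (hfd _ (hbij.mapsTo hw)) (hholo w hw)).trans
            (le_abs_self _)
    _ ≤ eLpNorm' g 2 (volume.restrict Ω') * volume Ω' ^ (1 / q - 1 / 2) := by
        simpa using eLpNorm'_le_eLpNorm'_mul_rpow_measure_univ hq hq2 hg_meas
    _ = eLpNorm' (fderiv ℝ f) 2 (volume.restrict Ω) * volume Ω' ^ (1 / q - 1 / 2) := by
        rw [eLpNorm'_two_norm_deriv_mul_comp hΩ'o.measurableSet
          (fun w hw => (hholo w hw).hasDerivWithinAt) hbij.injOn, hbij.image_eq]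
    _ ≤ eLpNorm' (fderiv ℝ f) p (volume.restrict Ω) * volume Ω ^ (1 / 2 - 1 / p)
          * volume Ω' ^ (1 / q - 1 / 2) := by
        gcongr
        simpa using eLpNorm'_le_eLpNorm'_mul_rpow_measure_univ (μ := volume.restrict Ω)
          two_pos hp.le (measurable_fderiv ℝ f).aestronglyMeasurable
    _ = _ := by
        rw [show 1 / 2 - 1 / p = (p - 2) / (2 * p) by field_simp,
          show 1 / q - 1 / 2 = (2 - q) / (2 * q) by field_simp]
        ring

theorem conformal_composition_operator_bound
    (Ω' Ω : Set ℂ) (hΩ'o : IsOpen Ω') (hΩo : IsOpen Ω)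
    (hΩ'sc : SimplyConnectedSpace ↥Ω') (hΩsc : SimplyConnectedSpace ↥Ω)
    (hΩ'fin : volume Ω' < ⊤) (hΩfin : volume Ω < ⊤)
    (φ : ℂ → ℂ) (φ' : ℂ → ℂ)
    (hholo : ∀ w ∈ Ω', HasDerivAt φ (φ' w) w)
    (hbij : Set.BijOn φ Ω' Ω)
    (p q : ℝ) (hp : 2 < p) (hq1 : 1 ≤ q) (hq2 : q ≤ 2)
    (f : ℂ → ℝ) (hf : ContDiffOn ℝ 1 f Ω) :
    (∫⁻ w in Ω', (‖fderiv ℝ (f ∘ φ) w‖₊ : ℝ≥0∞) ^ q) ^ (1 / q)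
      ≤ volume Ω ^ ((p - 2) / (2 * p)) * volume Ω' ^ ((2 - q) / (2 * q))
        * (∫⁻ z in Ω, (‖fderiv ℝ f z‖₊ : ℝ≥0∞) ^ p) ^ (1 / p) :=
  conformal_composition_operator_bound_general Ω' Ω hΩ'o hΩo φ φ' hholo hbij p q hp hq1 hq2 f hf
end

section
/- (Lower estimate for the first Dirichlet p-Laplace eigenvalue, Poincaré form.) Let Ω̃ and Ω be simply connected open subsets of ℂ with finite two-dimensional Lebesgue measure, let φ : Ω̃ → Ω be a holomorphic bijection, let α > 1 with ∫_{Ω̃} |φ'(w)|^{2α} dA(w) < ∞, and let p > 2. Set r = pα/(α-1) and q* = 2αp/(αp + 2(α-1)). Let q satisfy q* < q ≤ 2 and assume Ω̃ is an (r,q)-Sobolev–Poincaré domain with constant A. Then for every smooth function f : ℂ → ℝ with compact support contained in Ω, ∫_{Ω} |f(z)|^p dA(z) ≤ A^p · |Ω̃|^{p(2-q)/(2q)} · |Ω|^{(p-2)/2} · (∫_{Ω̃} |φ'(w)|^{2α} dA(w))^{1/α} · ∫_{Ω} ‖∇f(z)‖^p dA(z). -/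
open MeasureTheory Real Set
open scoped ENNReal

/-- A domain `D ⊂ ℂ` is an `(r,q)`-Sobolev–Poincaré domain with constant `A` if
`(∫_D |g|^r)^{1/r} ≤ A (∫_D ‖∇g‖^q)^{1/q}` for all smooth `g` compactly supported in `D`. -/
def IsSobolevPoincareDomain (D : Set ℂ) (r q A : ℝ) : Prop :=
  ∀ g : ℂ → ℝ, ContDiff ℝ (⊤ : ℕ∞) g → HasCompactSupport g → tsupport g ⊆ D →
    (∫⁻ w in D, (‖g w‖₊ : ℝ≥0∞) ^ r) ^ (1 / r)
      ≤ ENNReal.ofReal A * (∫⁻ w in D, (‖fderiv ℝ g w‖₊ : ℝ≥0∞) ^ q) ^ (1 / q)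

lemma det_complex_smulRight (c : ℂ) :
    (((1 : ℂ →L[ℂ] ℂ).smulRight c).restrictScalars ℝ).det = Complex.normSq c := by
  have h : ((((1 : ℂ →L[ℂ] ℂ).smulRight c).restrictScalars ℝ) : ℂ →ₗ[ℝ] ℂ)
      = (Algebra.lmul ℝ ℂ) c := by
    ext z
    simp [mul_comm]
  rw [ContinuousLinearMap.det, h, ← Algebra.norm_apply, Algebra.norm_complex_apply]

lemma ofReal_det (c : ℂ) :
    ENNReal.ofReal |(((1 : ℂ →L[ℂ] ℂ).smulRight c).restrictScalars ℝ).det|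
      = (‖c‖₊ : ℝ≥0∞) ^ (2 : ℝ) := by
  have h2 : Complex.normSq c = ‖c‖ ^ 2 := by
    rw [Complex.normSq_eq_norm_sq]
  have h3 : (‖c‖₊ : ℝ≥0∞) ^ (2:ℝ) = (‖c‖₊ : ℝ≥0∞) ^ (2:ℕ) := by
    rw [← ENNReal.rpow_natCast]; norm_num
  rw [det_complex_smulRight, abs_of_nonneg (Complex.normSq_nonneg c), h2, h3,
    ENNReal.ofReal_pow (norm_nonneg c), ofReal_norm, enorm_eq_nnnorm]


theorem first_dirichlet_eigenvalue_lower_estimate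
    (Ω' Ω : Set ℂ) (hΩ'o : IsOpen Ω') (hΩo : IsOpen Ω)
    (hΩ'sc : SimplyConnectedSpace ↥Ω') (hΩsc : SimplyConnectedSpace ↥Ω)
    (hΩ'fin : volume Ω' < ⊤) (hΩfin : volume Ω < ⊤)
    (φ : ℂ → ℂ) (φ' : ℂ → ℂ)
    (hholo : ∀ w ∈ Ω', HasDerivAt φ (φ' w) w)
    (hbij : Set.BijOn φ Ω' Ω)
    (α : ℝ) (hα : 1 < α)
    (hreg : ∫⁻ w in Ω', (‖φ' w‖₊ : ℝ≥0∞) ^ (2 * α) < ⊤)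
    (p q A : ℝ) (hp : 2 < p)
    (hq1 : 2 * α * p / (α * p + 2 * (α - 1)) < q) (hq2 : q ≤ 2)
    (hSP : IsSobolevPoincareDomain Ω' (p * α / (α - 1)) q A)
    (f : ℂ → ℝ) (hf : ContDiff ℝ (⊤ : ℕ∞) f) (hfc : HasCompactSupport f)
    (hfs : tsupport f ⊆ Ω) :
    ∫⁻ z in Ω, (‖f z‖₊ : ℝ≥0∞) ^ p
      ≤ ENNReal.ofReal A ^ p * volume Ω' ^ (p * (2 - q) / (2 * q))
          * volume Ω ^ ((p - 2) / 2)
          * (∫⁻ w in Ω', (‖φ' w‖₊ : ℝ≥0∞) ^ (2 * α)) ^ (1 / α)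
          * ∫⁻ z in Ω, (‖fderiv ℝ f z‖₊ : ℝ≥0∞) ^ p := by
  -- trivial case: Ω' empty
  rcases Set.eq_empty_or_nonempty Ω' with hΩ'e | hΩ'ne
  · have hΩe : Ω = ∅ := by rw [← hbij.image_eq, hΩ'e, Set.image_empty]
    simp [hΩe]
  -- basic positivity facts
  have hα0 : (0:ℝ) < α := by linarith
  have hα1 : (0:ℝ) < α - 1 := by linarith
  have hp0 : (0:ℝ) < p := by linarith
  have hq0 : (0:ℝ) < q := by
    refine lt_trans ?_ hq1
    positivity
  -- analyticity
  have hdiff : DifferentiableOn ℂ φ Ω' := fun w hw =>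
    ((hholo w hw).differentiableAt).differentiableWithinAt
  have hana : AnalyticOnNhd ℂ φ Ω' := hdiff.analyticOnNhd hΩ'o
  have hconn : IsPreconnected Ω' := by
    have : ConnectedSpace ↥Ω' := inferInstance
    exact ((isConnected_iff_connectedSpace (s := Ω')).mpr this).isPreconnected
  -- open mapping
  have hopen : ∀ s ⊆ Ω', IsOpen s → IsOpen (φ '' s) := by
    rcases hana.is_constant_or_isOpen hconn with ⟨c, hc⟩ | h
    · exfalso
      obtain ⟨w₀, hw₀⟩ := hΩ'ne
      obtain ⟨ε, hε, hball⟩ := Metric.isOpen_iff.mp hΩ'o w₀ hw₀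
      have hdist : dist (w₀ + (ε:ℂ)/2) w₀ = ε/2 := by
        rw [dist_eq_norm, show w₀ + (ε:ℂ)/2 - w₀ = ((ε/2:ℝ):ℂ) by push_cast; ring,
          Complex.norm_real, Real.norm_of_nonneg (by linarith)]
      have h1 : w₀ + ε/2 ∈ Ω' := hball (by rw [Metric.mem_ball, hdist]; linarith)
      have := hbij.injOn hw₀ h1 (by rw [hc w₀ hw₀, hc _ h1])
      have : (ε:ℂ)/2 = 0 := by linear_combination -this
      simp at this
      exact absurd this (by positivity)
    · exact h
  -- inverse map
  set ψ := Function.invFunOn φ Ω' with hψdef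
  have hinv : Set.InvOn ψ φ Ω' Ω := hbij.invOn_invFunOn
  have hψmem : ∀ z ∈ Ω, ψ z ∈ Ω' := fun z hz => hbij.surjOn.mapsTo_invFunOn hz
  have hψcont : ContinuousOn ψ Ω := by
    rw [continuousOn_iff']
    intro t ht
    refine ⟨φ '' (t ∩ Ω'), hopen _ inter_subset_right (ht.inter hΩ'o), ?_⟩
    ext z
    constructor
    · rintro ⟨hzt, hz⟩
      exact ⟨⟨ψ z, ⟨hzt, hψmem z hz⟩, hinv.2 hz⟩, hz⟩
    · rintro ⟨⟨w, ⟨hwt, hw⟩, rfl⟩, hz⟩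
      exact ⟨by rwa [Set.mem_preimage, hinv.1 hw], hz⟩
  -- compact set K
  set K := ψ '' tsupport f with hKdef
  have hK : IsCompact K := hfc.image_of_continuousOn (hψcont.mono hfs)
  have hKΩ' : K ⊆ Ω' := by
    rintro _ ⟨z, hz, rfl⟩
    exact hψmem z (hfs hz)
  -- the transplanted function
  set g : ℂ → ℝ := Ω'.indicator (fun w => f (φ w)) with hgdef
  have hg0 : ∀ w, w ∉ K → g w = 0 := by
    intro w hw
    by_cases hwΩ : w ∈ Ω'
    · rw [hgdef, Set.indicator_of_mem hwΩ]
      by_contra hne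
      have h1 : φ w ∈ tsupport f := subset_tsupport f hne
      exact hw ⟨φ w, h1, hinv.1 hwΩ⟩
    · exact Set.indicator_of_notMem hwΩ _
  have hgc : HasCompactSupport g := HasCompactSupport.intro hK hg0
  have hgs : tsupport g ⊆ Ω' := by
    refine (closure_minimal ?_ hK.isClosed).trans hKΩ'
    intro w hw
    by_contra hwK
    exact hw (hg0 w hwK)
  have hgev : ∀ w ∈ Ω', g =ᶠ[nhds w] (f ∘ φ) := by
    intro w hw
    filter_upwards [hΩ'o.mem_nhds hw] with x hx
    rw [hgdef, Set.indicator_of_mem hx, Function.comp_apply]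
  have hgsm : ContDiff ℝ (⊤ : ℕ∞) g := by
    rw [contDiff_iff_contDiffAt]
    intro x
    by_cases hx : x ∈ Ω'
    · have hφc : ContDiffAt ℝ (⊤ : ℕ∞) φ x := ((hana x hx).contDiffAt).restrict_scalars ℝ
      exact (((hf.contDiffAt).comp x hφc)).congr_of_eventuallyEq (hgev x hx)
    · have hxK : x ∉ K := fun h => hx (hKΩ' h)
      refine (contDiffAt_const (c := (0:ℝ))).congr_of_eventuallyEq ?_
      filter_upwards [hK.isClosed.isOpen_compl.mem_nhds hxK] with y hy
      exact hg0 y hy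
  -- derivative formula and bound
  have hfd : ∀ w ∈ Ω', fderiv ℝ g w
      = (fderiv ℝ f (φ w)).comp
          (((1 : ℂ →L[ℂ] ℂ).smulRight (φ' w)).restrictScalars ℝ) := by
    intro w hw
    have hcomp : HasFDerivAt (f ∘ φ)
        ((fderiv ℝ f (φ w)).comp
          (((1 : ℂ →L[ℂ] ℂ).smulRight (φ' w)).restrictScalars ℝ)) w :=
      ((hf.differentiable (by simp) (φ w)).hasFDerivAt).comp w
        (((hholo w hw).hasFDerivAt).restrictScalars ℝ)
    rw [(hgev w hw).fderiv_eq, hcomp.fderiv]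
  have hDbound : ∀ w ∈ Ω',
      (‖fderiv ℝ g w‖₊ : ℝ≥0∞) ≤ (‖fderiv ℝ f (φ w)‖₊ : ℝ≥0∞) * (‖φ' w‖₊ : ℝ≥0∞) := by
    intro w hw
    rw [← ENNReal.coe_mul, ENNReal.coe_le_coe, ← NNReal.coe_le_coe]
    push_cast
    rw [hfd w hw]
    refine (ContinuousLinearMap.opNorm_comp_le _ _).trans ?_
    rw [ContinuousLinearMap.norm_restrictScalars, ContinuousLinearMap.norm_smulRight_apply]
    rw [ContinuousLinearMap.one_def, ContinuousLinearMap.norm_id, one_mul]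
  -- change of variables
  have hcov : ∀ G : ℂ → ℝ≥0∞, ∫⁻ z in Ω, G z
      = ∫⁻ w in Ω', (‖φ' w‖₊ : ℝ≥0∞) ^ (2:ℝ) * G (φ w) := by
    intro G
    rw [← hbij.image_eq]
    rw [lintegral_image_eq_lintegral_abs_det_fderiv_mul volume hΩ'o.measurableSet
      (fun w hw => (((hholo w hw).hasFDerivAt).restrictScalars ℝ).hasFDerivWithinAt)
      hbij.injOn G]
    refine setLIntegral_congr_fun hΩ'o.measurableSet ?_
    intro w hw
    dsimp only
    erw [ofReal_det]
  -- measurability facts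
  have hmφ' : AEMeasurable (fun w => ((‖φ' w‖₊ : ℝ≥0∞))) (volume.restrict Ω') := by
    refine AEMeasurable.congr ((measurable_deriv φ).nnnorm.coe_nnreal_ennreal).aemeasurable ?_
    filter_upwards [ae_restrict_mem hΩ'o.measurableSet] with w hw
    rw [(hholo w hw).deriv]
  have hmE : AEMeasurable (fun w => ((‖fderiv ℝ f (φ w)‖₊ : ℝ≥0∞))) (volume.restrict Ω') := by
    have hφm : AEMeasurable φ (volume.restrict Ω') :=
      hdiff.continuousOn.aemeasurable hΩ'o.measurableSet
    exact ((hf.continuous_fderiv (by simp)).measurable.nnnorm.coe_nnreal_ennreal).comp_aemeasurable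
      hφm
  have hmg : AEMeasurable (fun w => ((‖g w‖₊ : ℝ≥0∞))) (volume.restrict Ω') :=
    (hgsm.continuous.measurable.nnnorm.coe_nnreal_ennreal).aemeasurable
  -- abbreviations
  set r : ℝ := p * α / (α - 1) with hrdef
  set Iφ := ∫⁻ w in Ω', (‖φ' w‖₊ : ℝ≥0∞) ^ (2 * α) with hIφ
  set Jp := ∫⁻ z in Ω, (‖fderiv ℝ f z‖₊ : ℝ≥0∞) ^ p with hJp
  set J2 := ∫⁻ z in Ω, (‖fderiv ℝ f z‖₊ : ℝ≥0∞) ^ (2:ℝ) with hJ2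
  set Dq := ∫⁻ w in Ω', (‖fderiv ℝ g w‖₊ : ℝ≥0∞) ^ q with hDq
  set Gr := ∫⁻ w in Ω', (‖g w‖₊ : ℝ≥0∞) ^ r with hGr
  set Mq := ∫⁻ w in Ω', ((‖fderiv ℝ f (φ w)‖₊ : ℝ≥0∞) * (‖φ' w‖₊ : ℝ≥0∞)) ^ q with hMq
  set M2 := ∫⁻ w in Ω', ((‖fderiv ℝ f (φ w)‖₊ : ℝ≥0∞) * (‖φ' w‖₊ : ℝ≥0∞)) ^ (2:ℝ) with hM2
  -- Step 1: change of variables for the LHS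
  have step1 : ∫⁻ z in Ω, (‖f z‖₊ : ℝ≥0∞) ^ p
      = ∫⁻ w in Ω', (‖g w‖₊ : ℝ≥0∞) ^ p * (‖φ' w‖₊ : ℝ≥0∞) ^ (2:ℝ) := by
    rw [hcov (fun z => (‖f z‖₊ : ℝ≥0∞) ^ p)]
    refine setLIntegral_congr_fun hΩ'o.measurableSet ?_
    intro w hw
    dsimp only
    rw [hgdef, Set.indicator_of_mem hw, mul_comm]
  -- Step 2: Hoelder with exponents α/(α-1), α
  have step2 : ∫⁻ w in Ω', (‖g w‖₊ : ℝ≥0∞) ^ p * (‖φ' w‖₊ : ℝ≥0∞) ^ (2:ℝ)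
      ≤ Gr ^ ((α-1)/α) * Iφ ^ (1/α) := by
    have hc1 : (α/(α-1)).HolderConjugate α := by
      rw [Real.holderConjugate_iff]; constructor
      · rw [lt_div_iff₀ hα1]; linarith
      · field_simp; ring
    have h := ENNReal.lintegral_mul_le_Lp_mul_Lq (volume.restrict Ω') hc1
      (hmg.pow_const p) (hmφ'.pow_const (2:ℝ))
    refine h.trans (le_of_eq ?_)
    have e1 : ∫⁻ w in Ω', ((‖g w‖₊ : ℝ≥0∞) ^ p) ^ (α/(α-1)) = Gr := by
      refine setLIntegral_congr_fun hΩ'o.measurableSet ?_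
      intro w _
      dsimp only
      rw [← ENNReal.rpow_mul, hrdef, mul_div_assoc']
    have e2 : ∫⁻ w in Ω', ((‖φ' w‖₊ : ℝ≥0∞) ^ (2:ℝ)) ^ α = Iφ := by
      refine setLIntegral_congr_fun hΩ'o.measurableSet ?_
      intro w _
      dsimp only
      rw [← ENNReal.rpow_mul]
    have e3 : 1/(α/(α-1)) = (α-1)/α := one_div_div _ _
    rw [e1, e2, e3]
  -- Step 3: Sobolev-Poincare
  have step3 : Gr ^ ((α-1)/α) ≤ ENNReal.ofReal A ^ p * Dq ^ (p/q) := by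
    have hr : (α-1)/α = (1/r) * p := by
      rw [hrdef]; field_simp
    rw [hr, ENNReal.rpow_mul]
    calc (Gr ^ (1/r)) ^ p
        ≤ (ENNReal.ofReal A * Dq ^ (1/q)) ^ p :=
          ENNReal.rpow_le_rpow (hSP g hgsm hgc hgs) hp0.le
      _ = ENNReal.ofReal A ^ p * Dq ^ (p/q) := by
          rw [ENNReal.mul_rpow_of_nonneg _ _ hp0.le, ← ENNReal.rpow_mul,
            one_div_mul_eq_div]
  -- Step 4: chain rule bound
  have step4 : Dq ≤ Mq := by
    refine lintegral_mono_ae ?_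
    filter_upwards [ae_restrict_mem hΩ'o.measurableSet] with w hw
    exact ENNReal.rpow_le_rpow (hDbound w hw) hq0.le
  -- Step 5: Hoelder with exponents 2/q, 2/(2-q)
  have step5 : Mq ≤ M2 ^ (q/2) * (volume Ω') ^ ((2-q)/2) := by
    rcases eq_or_lt_of_le hq2 with hq2' | hq2'
    · subst hq2'
      rw [show ((2:ℝ)-2)/2 = 0 by norm_num, ENNReal.rpow_zero, mul_one,
        show ((2:ℝ)/2) = 1 by norm_num, ENNReal.rpow_one]
    · have hc2 : ((2:ℝ)/q).HolderConjugate (2/(2-q)) := by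
        rw [Real.holderConjugate_iff]; constructor
        · rw [lt_div_iff₀ hq0]; linarith
        · first | (field_simp; ring) | field_simp
      have hmM : AEMeasurable (fun w => ((‖fderiv ℝ f (φ w)‖₊ : ℝ≥0∞)
          * (‖φ' w‖₊ : ℝ≥0∞)) ^ q) (volume.restrict Ω') :=
        (hmE.mul hmφ').pow_const q
      have h := ENNReal.lintegral_mul_le_Lp_mul_Lq (volume.restrict Ω') hc2
        hmM aemeasurable_const (g := fun _ => (1:ℝ≥0∞))
      simp only [Pi.mul_apply, mul_one, ENNReal.one_rpow] at h
      rw [lintegral_one, Measure.restrict_apply_univ] at h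
      refine le_trans (le_of_eq ?_) (h.trans (le_of_eq ?_))
      · rfl
      · congr 2
        · refine setLIntegral_congr_fun hΩ'o.measurableSet ?_
          intro w _
          dsimp only
          rw [← ENNReal.rpow_mul]
          congr 1
          field_simp
        · rw [one_div_div]
        · rw [one_div_div]
  -- Step 6: change of variables back
  have step6 : M2 = J2 := by
    rw [hJ2, hcov (fun z => (‖fderiv ℝ f z‖₊ : ℝ≥0∞) ^ (2:ℝ)), hM2]
    refine setLIntegral_congr_fun hΩ'o.measurableSet ?_
    intro w _
    dsimp only
    rw [ENNReal.mul_rpow_of_nonneg _ _ (by norm_num : (0:ℝ) ≤ 2), mul_comm]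
  -- Step 7: Hoelder on Ω
  have step7 : J2 ≤ Jp ^ (2/p) * (volume Ω) ^ ((p-2)/p) := by
    have hc3 : (p/2).HolderConjugate (p/(p-2)) := by
      rw [Real.holderConjugate_iff]; constructor
      · rw [lt_div_iff₀ (by norm_num : (0:ℝ) < 2)]; linarith
      · first | (field_simp; ring) | field_simp
    have hmf : AEMeasurable (fun z => (‖fderiv ℝ f z‖₊ : ℝ≥0∞) ^ (2:ℝ))
        (volume.restrict Ω) :=
      (((hf.continuous_fderiv (by simp)).measurable.nnnorm.coe_nnreal_ennreal).aemeasurable).pow_const _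
    have h := ENNReal.lintegral_mul_le_Lp_mul_Lq (volume.restrict Ω) hc3
      hmf aemeasurable_const (g := fun _ => (1:ℝ≥0∞))
    simp only [Pi.mul_apply, mul_one, ENNReal.one_rpow] at h
    rw [lintegral_one, Measure.restrict_apply_univ] at h
    refine h.trans (le_of_eq ?_)
    congr 2
    · refine setLIntegral_congr_fun hΩo.measurableSet ?_
      intro z _
      dsimp only
      rw [← ENNReal.rpow_mul]
      congr 1
      field_simp
    · rw [one_div_div]
    · rw [one_div_div]
  -- assemble everything
  have hDqpq : Dq ^ (p/q) ≤ Jp ^ (1:ℝ) * (volume Ω) ^ ((p-2)/2) * (volume Ω') ^ (p*(2-q)/(2*q)) := by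
    have h1 : Dq ^ (p/q) ≤ (M2 ^ (q/2) * (volume Ω') ^ ((2-q)/2)) ^ (p/q) :=
      ENNReal.rpow_le_rpow (step4.trans step5) (by positivity)
    refine h1.trans ?_
    rw [ENNReal.mul_rpow_of_nonneg _ _ (by positivity), ← ENNReal.rpow_mul, ← ENNReal.rpow_mul]
    have e1 : q/2 * (p/q) = p/2 := by first | (field_simp; ring) | field_simp
    have e2 : (2-q)/2 * (p/q) = p*(2-q)/(2*q) := by first | (field_simp; ring) | field_simp
    rw [e1, e2]
    refine mul_le_mul' ?_ le_rfl
    have h2 : M2 ^ ((p:ℝ)/2) ≤ (Jp ^ (2/p) * (volume Ω) ^ ((p-2)/p)) ^ (p/2) :=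
      ENNReal.rpow_le_rpow (step6 ▸ step7) (by positivity)
    refine h2.trans (le_of_eq ?_)
    rw [ENNReal.mul_rpow_of_nonneg _ _ (by positivity), ← ENNReal.rpow_mul, ← ENNReal.rpow_mul]
    have e3 : (2:ℝ)/p * (p/2) = 1 := by first | (field_simp; ring) | field_simp
    have e4 : (p-2)/p * (p/2) = (p-2)/2 := by first | (field_simp; ring) | field_simp
    rw [e3, e4]
  calc ∫⁻ z in Ω, (‖f z‖₊ : ℝ≥0∞) ^ p
      = ∫⁻ w in Ω', (‖g w‖₊ : ℝ≥0∞) ^ p * (‖φ' w‖₊ : ℝ≥0∞) ^ (2:ℝ) := step1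
    _ ≤ Gr ^ ((α-1)/α) * Iφ ^ (1/α) := step2
    _ ≤ (ENNReal.ofReal A ^ p * Dq ^ (p/q)) * Iφ ^ (1/α) := mul_le_mul' step3 le_rfl
    _ ≤ (ENNReal.ofReal A ^ p * (Jp ^ (1:ℝ) * (volume Ω) ^ ((p-2)/2)
          * (volume Ω') ^ (p*(2-q)/(2*q)))) * Iφ ^ (1/α) :=
        mul_le_mul' (mul_le_mul' le_rfl hDqpq) le_rfl
    _ = ENNReal.ofReal A ^ p * volume Ω' ^ (p * (2 - q) / (2 * q))
          * volume Ω ^ ((p - 2) / 2) * Iφ ^ (1 / α) * Jp := by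
        rw [ENNReal.rpow_one]
        ring
end
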